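/- arXiv:2104.12566 — 3 statements merged into one kernel-verified Lean document; each statement's English description precedes it below -/
import Mathlib

section
/- Let ι be a nonempty finite index set, (X_i)_{i∈ι} a family of sets, X = ∏_{i∈ι} X_i, and M a commutative group (written multiplicatively). Let μ be a finitely additive ℤ-valued set function on subsets of X, i.e. for every finite pairwise disjoint family of subsets of X the value of μ on the union equals the sum of the values. Fix i₀ ∈ ι and assume μ vanishes on every 'cylinder missing the i₀-th coordinate', i.e. μ({x ∈ X : x_j ∈ V_j for all j ≠ i₀}) = 0 for every choice of subsets V_j ⊆ X_j (j ≠ i₀). For each i ∈ ι let 𝒰_i be a finite partition of X_i, let t_i : 𝒰_i → X_i be a choice of points with t_i(U) ∈ U for all U ∈ 𝒰_i, and let f_i : X_i → M be a function such that f_{i₀} is constant. Then the Riemann product over the grid partition is trivial: ∏_{P ∈ ∏_i 𝒰_i} ( ∏_{i∈ι} f_i(t_i(P_i)) )^{μ({x ∈ X : x_i ∈ P_i for all i})} = 1, where m^k for k ∈ ℤ denotes the k-th power in M. -/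
private lemma prod_zpow_eq_zpow_sum {M : Type*} [CommGroup M] {α : Type*}
    (s : Finset α) (g : α → ℤ) (b : M) :
    ∏ k ∈ s, b ^ g k = b ^ ∑ k ∈ s, g k := by
  induction s using Finset.cons_induction with
  | empty => simp
  | cons a s ha ih => rw [Finset.prod_cons, Finset.sum_cons, ih, zpow_add]


/-- **Triviality of Riemann products of product functions with a constant factor
against a plectic measure.**

Let `ι` be a nonempty finite index set, `(X i)` a family of sets, `M` a commutative
group, and `μ` a finitely additive `ℤ`-valued set function on subsets of `∀ i, X i`.
Assume `μ` vanishes on every cylinder missing the `i₀`-th coordinate.  For finite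
partitions `𝒰 i` (indexed by `κ i`) of each `X i` with sample points `t i k ∈ 𝒰 i k`,
and functions `f i : X i → M` with `f i₀` constant, the Riemann product over the grid
partition is trivial. -/
theorem riemann_product_trivial_of_constant_factor
    {ι : Type*} [Fintype ι] [DecidableEq ι] [Nonempty ι]
    {X : ι → Type*} {M : Type*} [CommGroup M]
    (μ : Set (∀ i, X i) → ℤ)
    (hadd : ∀ (n : ℕ) (s : Fin n → Set (∀ i, X i)),
      Pairwise (Function.onFun Disjoint s) → μ (⋃ k, s k) = ∑ k, μ (s k))
    (i₀ : ι)
    (hcyl : ∀ V : ∀ j, Set (X j), μ {x | ∀ j, j ≠ i₀ → x j ∈ V j} = 0)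
    (κ : ι → Type*) [∀ i, Fintype (κ i)]
    (𝒰 : ∀ i, κ i → Set (X i))
    (hdisj : ∀ i, Pairwise (Function.onFun Disjoint (𝒰 i)))
    (hcover : ∀ i, ⋃ k, 𝒰 i k = Set.univ)
    (t : ∀ i, κ i → X i) (ht : ∀ i k, t i k ∈ 𝒰 i k)
    (f : ∀ i, X i → M) (hconst : ∀ x y : X i₀, f i₀ x = f i₀ y) :
    ∏ P : ∀ i, κ i,
      (∏ i, f i (t i (P i))) ^ (μ {x | ∀ i, x i ∈ 𝒰 i (P i)}) = 1 := by
  classical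
  rcases isEmpty_or_nonempty (κ i₀) with h | h
  · haveI : IsEmpty (∀ i, κ i) := ⟨fun P => h.false (P i₀)⟩
    simp
  · obtain ⟨k₀⟩ := h
    set e := (Equiv.piSplitAt i₀ κ).symm with he
    rw [← e.prod_comp]
    rw [Fintype.prod_prod_type]
    rw [Finset.prod_comm]
    -- now goal : ∏ Q, ∏ k, ...
    apply Finset.prod_eq_one
    intro Q _
    -- P for given k : e (k, Q)
    have hP : ∀ (k : κ i₀) (i : ι), e (k, Q) i = if h : i = i₀ then h ▸ k else Q ⟨i, h⟩ := by
      intro k i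
      simp [he, Equiv.piSplitAt]
    have hPi₀ : ∀ k : κ i₀, e (k, Q) i₀ = k := fun k => by simp [hP]
    have hPj : ∀ (k : κ i₀) (j : ι) (h : j ≠ i₀), e (k, Q) j = Q ⟨j, h⟩ := by
      intro k j h; simp [hP, h]
    -- the factor is independent of k
    have hA : ∀ k : κ i₀, (∏ i, f i (t i (e (k, Q) i))) = ∏ i, f i (t i (e (k₀, Q) i)) := by
      intro k
      apply Finset.prod_congr rfl
      intro i _
      rcases eq_or_ne i i₀ with rfl | hne
      · rw [hPi₀, hPi₀]; exact hconst _ _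
      · rw [hPj k i hne, hPj k₀ i hne]
    calc ∏ k : κ i₀, (∏ i, f i (t i (e (k, Q) i))) ^ μ {x | ∀ i, x i ∈ 𝒰 i (e (k, Q) i)}
        = ∏ k : κ i₀, (∏ i, f i (t i (e (k₀, Q) i))) ^ μ {x | ∀ i, x i ∈ 𝒰 i (e (k, Q) i)} := by
          exact Finset.prod_congr rfl fun k _ => by rw [hA]
      _ = (∏ i, f i (t i (e (k₀, Q) i))) ^ ∑ k : κ i₀, μ {x | ∀ i, x i ∈ 𝒰 i (e (k, Q) i)} :=
          prod_zpow_eq_zpow_sum _ _ _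
      _ = 1 := by
          have hsum : ∑ k : κ i₀, μ {x | ∀ i, x i ∈ 𝒰 i (e (k, Q) i)} = 0 := by
            set ψ := Fintype.equivFin (κ i₀)
            have key := hadd (Fintype.card (κ i₀))
              (fun m => {x | ∀ i, x i ∈ 𝒰 i (e (ψ.symm m, Q) i)}) ?_
            · have hre := Fintype.sum_equiv ψ
                (fun k => μ {x | ∀ i, x i ∈ 𝒰 i (e (k, Q) i)})
                (fun m => μ {x | ∀ i, x i ∈ 𝒰 i (e (ψ.symm m, Q) i)})
                (fun k => by simp only [Equiv.symm_apply_apply])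
              rw [hre, ← key]
              have hU : (⋃ m, {x : ∀ i, X i | ∀ i, x i ∈ 𝒰 i (e (ψ.symm m, Q) i)})
                  = {x | ∀ j, j ≠ i₀ →
                      x j ∈ (fun j => if h : j = i₀ then Set.univ else 𝒰 j (Q ⟨j, h⟩)) j} := by
                ext x
                simp only [Set.mem_iUnion, Set.mem_setOf_eq]
                constructor
                · rintro ⟨m, hm⟩ j hj
                  have := hm j
                  rw [hPj _ j hj] at this
                  simp [hj, this]
                · intro hx
                  have hxcov : x i₀ ∈ ⋃ k, 𝒰 i₀ k := by rw [hcover i₀]; trivial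
                  obtain ⟨k, hk⟩ := Set.mem_iUnion.mp hxcov
                  refine ⟨ψ k, fun i => ?_⟩
                  rcases eq_or_ne i i₀ with rfl | hne
                  · rw [hPi₀, ψ.symm_apply_apply]; exact hk
                  · rw [hPj _ i hne]
                    have := hx i hne
                    simpa [hne] using this
              rw [hU, hcyl]
            · intro m m' hmm
              have hkk : ψ.symm m ≠ ψ.symm m' := fun hc => hmm (by
                have := congrArg ψ hc; simpa using this)
              have hd := hdisj i₀ hkk
              rw [Function.onFun, Set.disjoint_left]
              intro x hx hx'
              have h1 := hx i₀
              have h2 := hx' i₀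
              rw [hPi₀] at h1 h2
              exact (Set.disjoint_left.mp hd) h1 h2
          rw [hsum, zpow_zero]
end

section
/- Let G be a simple graph on a vertex set 𝒱 which is a tree (connected and acyclic) and regular of degree d for some d ≥ 2, let v₀ ∈ 𝒱 be a fixed base vertex and m ∈ ℕ. For an oriented edge (dart) e of G with source s(e) and target t(e), say e lies within radius m+1 if both dist(v₀, s(e)) ≤ m+1 and dist(v₀, t(e)) ≤ m+1, where dist denotes graph distance. Then for every function f defined on the vertices v with dist(v₀, v) ≤ m and valued in ℚ, there exists a function c from the darts of G to ℚ such that: (i) c(e) + c(ē) = 0 for every dart e, where ē is the reversed dart; (ii) c(e) = 0 whenever e does not lie within radius m+1; and (iii) for every vertex v with dist(v₀, v) ≤ m, the sum of c(e) over the d darts e with s(e) = v equals f(v). -/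
open SimpleGraph

section Aux

variable {V : Type*} {G : SimpleGraph V}

/-- recursive value function along the tree -/
private noncomputable def treeAuxS [DecidableEq V] (dist : V → ℕ) (par ch : V → V)
    (hpar : ∀ v, dist v ≠ 0 → dist (par v) < dist v) (f : V → ℚ) (v : V) : ℚ :=
  if h : dist v = 0 then 0
  else if v = ch (par v) then f (par v) + treeAuxS dist par ch hpar f (par v) else 0
termination_by dist v
decreasing_by exact hpar v h

private lemma tree_dist_ne (htree : G.IsTree) (v₀ u w : V) (h : G.Adj u w) :
    G.dist v₀ u ≠ G.dist v₀ w := by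
  classical
  intro heq
  obtain ⟨p, hp, hplen⟩ := htree.isConnected.exists_path_of_dist v₀ u
  by_cases hw : w ∈ p.support
  · have h1 := congr_arg Walk.length (p.take_spec hw)
    rw [Walk.length_append] at h1
    have h2 : (p.dropUntil w hw).length ≠ 0 := fun h0 =>
      h.ne (Walk.eq_of_length_eq_zero h0).symm
    have h3 : G.dist v₀ w ≤ (p.takeUntil w hw).length := SimpleGraph.dist_le _
    omega
  · have hq : (p.concat h).IsPath := by
      rw [← Walk.isPath_reverse_iff, Walk.reverse_concat]
      refine hp.reverse.cons ?_
      rw [Walk.support_reverse, List.mem_reverse]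
      exact hw
    obtain ⟨r, hr, hrlen⟩ := htree.isConnected.exists_path_of_dist v₀ w
    have huniq := htree.IsAcyclic.path_unique ⟨p.concat h, hq⟩ ⟨r, hr⟩
    have hlen : (p.concat h).length = r.length := by
      rw [show (p.concat h) = r from congrArg Subtype.val huniq]
    rw [Walk.length_concat] at hlen
    omega

private lemma tree_dist_dichotomy (htree : G.IsTree) (v₀ u w : V) (h : G.Adj u w) :
    G.dist v₀ w = G.dist v₀ u + 1 ∨ G.dist v₀ u = G.dist v₀ w + 1 := by
  have h1 : G.dist v₀ w ≤ G.dist v₀ u + 1 := by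
    have := htree.isConnected.dist_triangle (u := v₀) (v := u) (w := w)
    rwa [SimpleGraph.dist_eq_one_iff_adj.mpr h] at this
  have h2 : G.dist v₀ u ≤ G.dist v₀ w + 1 := by
    have := htree.isConnected.dist_triangle (u := v₀) (v := w) (w := u)
    rwa [SimpleGraph.dist_eq_one_iff_adj.mpr h.symm] at this
  have h3 := tree_dist_ne htree v₀ u w h
  omega

private lemma tree_parent (htree : G.IsTree) (v₀ v : V) (hv : G.dist v₀ v ≠ 0) :
    ∃ w, G.Adj v w ∧ G.dist v₀ w + 1 = G.dist v₀ v := by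
  obtain ⟨p, hp, hplen⟩ := htree.isConnected.exists_path_of_dist v₀ v
  have hne : v ≠ v₀ := by
    rintro rfl
    simp at hv
  obtain ⟨x, h, q, hq⟩ := Walk.exists_eq_cons_of_ne hne p.reverse
  refine ⟨x, h, ?_⟩
  have hx : G.dist v₀ x ≤ q.reverse.length := SimpleGraph.dist_le _
  rw [Walk.length_reverse] at hx
  have hlen : p.length = q.length + 1 := by
    have := congr_arg Walk.length hq
    rwa [Walk.length_reverse, Walk.length_cons] at this
  have htri : G.dist v₀ v ≤ G.dist v₀ x + 1 := by
    have := htree.isConnected.dist_triangle (u := v₀) (v := x) (w := v)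
    rwa [SimpleGraph.dist_eq_one_iff_adj.mpr h.symm] at this
  omega

private lemma tree_parent_unique (htree : G.IsTree) (v₀ v w1 w2 : V)
    (h1 : G.Adj v w1) (h2 : G.Adj v w2)
    (hd1 : G.dist v₀ w1 + 1 = G.dist v₀ v) (hd2 : G.dist v₀ w2 + 1 = G.dist v₀ v) :
    w1 = w2 := by
  obtain ⟨p1, hp1, hl1⟩ := htree.isConnected.exists_path_of_dist v₀ w1
  obtain ⟨p2, hp2, hl2⟩ := htree.isConnected.exists_path_of_dist v₀ w2
  have hq1 : (p1.concat h1.symm).IsPath := by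
    apply Walk.isPath_of_length_eq_dist
    rw [Walk.length_concat]
    omega
  have hq2 : (p2.concat h2.symm).IsPath := by
    apply Walk.isPath_of_length_eq_dist
    rw [Walk.length_concat]
    omega
  have huniq := htree.IsAcyclic.path_unique ⟨p1.concat h1.symm, hq1⟩ ⟨p2.concat h2.symm, hq2⟩
  have heq : p1.concat h1.symm = p2.concat h2.symm := congrArg Subtype.val huniq
  have := congrArg (fun r => r.reverse.getVert 1) heq
  simpa [Walk.reverse_concat, Walk.getVert_cons_succ] using this

private lemma tree_child (htree : G.IsTree) [G.LocallyFinite] (d : ℕ) (hd : 2 ≤ d)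
    (hreg : G.IsRegularOfDegree d) (v₀ v : V) :
    ∃ w, G.Adj v w ∧ G.dist v₀ w = G.dist v₀ v + 1 := by
  by_contra hcon
  push_neg at hcon
  have hall : ∀ w, G.Adj v w → G.dist v₀ w + 1 = G.dist v₀ v := by
    intro w hw
    rcases tree_dist_dichotomy htree v₀ v w hw with h | h
    · exact absurd h (hcon w hw)
    · omega
  have hcard : 1 < (G.neighborFinset v).card := by
    rw [show (G.neighborFinset v).card = G.degree v from rfl, hreg v]; omega
  obtain ⟨a, ha, b, hb, hab⟩ := Finset.one_lt_card.mp hcard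
  rw [SimpleGraph.mem_neighborFinset] at ha hb
  exact hab (tree_parent_unique htree v₀ v a b ha hb (hall a ha) (hall b hb))

end Aux

/-- **Surjectivity of the degeneracy map on alternating edge functions of a regular tree.**

Let `G` be a tree which is regular of degree `d ≥ 2`, `v₀` a base vertex and `m : ℕ`.
For every `f : V → ℚ` there is an alternating function `c` on the darts of `G`,
supported on darts lying within radius `m + 1` of `v₀`, such that for every vertex `v`
with `dist v₀ v ≤ m` the sum of `c` over the darts with source `v` equals `f v`. -/
theorem exists_alternating_dart_function_of_tree
    {V : Type*} (G : SimpleGraph V) [G.LocallyFinite]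
    (htree : G.IsTree) (d : ℕ) (hd : 2 ≤ d) (hreg : G.IsRegularOfDegree d)
    (v₀ : V) (m : ℕ) (f : V → ℚ) :
    ∃ c : G.Dart → ℚ,
      (∀ e : G.Dart, c e + c e.symm = 0) ∧
      (∀ e : G.Dart,
        ¬(G.dist v₀ e.toProd.1 ≤ m + 1 ∧ G.dist v₀ e.toProd.2 ≤ m + 1) → c e = 0) ∧
      (∀ v : V, G.dist v₀ v ≤ m →
        ∑ w : G.neighborSet v, c ⟨(v, (w : V)), w.2⟩ = f v) := by
  classical
  -- choose parents and children
  choose! par hpar1 hpar2 using fun v (hv : G.dist v₀ v ≠ 0) => tree_parent htree v₀ v hv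
  choose ch hch1 hch2 using fun v => tree_child htree d hd hreg v₀ v
  have hparlt : ∀ v, G.dist v₀ v ≠ 0 → G.dist v₀ (par v) < G.dist v₀ v := by
    intro v hv; have := hpar2 v hv; omega
  set s : V → ℚ := treeAuxS (G.dist v₀) par ch hparlt f with hs
  have hs0 : s v₀ = 0 := by
    rw [hs, treeAuxS]
    simp
  have hseval : ∀ w, G.dist v₀ w ≠ 0 →
      s w = if w = ch (par w) then f (par w) + s (par w) else 0 := by
    intro w hw
    rw [hs, treeAuxS, dif_neg hw]
  have hchdist : ∀ v, G.dist v₀ (ch v) ≠ 0 := by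
    intro v; rw [hch2 v]; omega
  have hparch : ∀ v, par (ch v) = v := by
    intro v
    have h1 := hpar1 (ch v) (hchdist v)
    have h2 := hpar2 (ch v) (hchdist v)
    exact tree_parent_unique htree v₀ (ch v) (par (ch v)) v h1 (hch1 v).symm h2
      (by rw [hch2 v])
  have hsch : ∀ v, s (ch v) = f v + s v := by
    intro v
    rw [hseval (ch v) (hchdist v), hparch v, if_pos rfl]
  have hsother : ∀ v w, G.Adj v w → G.dist v₀ w = G.dist v₀ v + 1 → w ≠ ch v → s w = 0 := by
    intro v w hvw hdw hne
    have hw0 : G.dist v₀ w ≠ 0 := by omega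
    have hpw : par w = v := by
      refine tree_parent_unique htree v₀ w (par w) v (hpar1 w hw0) hvw.symm (hpar2 w hw0) ?_
      omega
    rw [hseval w hw0, hpw, if_neg hne]
  -- the half-edge function
  set B : V → V → ℚ := fun u w =>
    if G.dist v₀ w = G.dist v₀ u + 1 ∧ G.dist v₀ w ≤ m + 1 then s w else 0 with hB
  refine ⟨fun e => B e.toProd.1 e.toProd.2 - B e.toProd.2 e.toProd.1, ?_, ?_, ?_⟩
  · intro e
    simp only [Dart.symm_toProd, Prod.fst_swap, Prod.snd_swap]
    ring
  · rintro ⟨⟨u, w⟩, hadj⟩ hne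
    simp only [not_and_or, not_le] at hne
    simp only [hB]
    rcases tree_dist_dichotomy htree v₀ u w hadj with hcase | hcase <;>
      rw [if_neg (by omega), if_neg (by omega)] <;> ring
  · intro v hv
    have hsum : ∀ w : G.neighborSet v,
        (fun e : G.Dart => B e.toProd.1 e.toProd.2 - B e.toProd.2 e.toProd.1)
          ⟨(v, (w : V)), w.2⟩ = B v w - B w v := fun w => rfl
    rw [Finset.sum_congr rfl (fun w _ => hsum w), Finset.sum_sub_distrib]
    have hB1 : ∑ w : G.neighborSet v, B v (w : V) = f v + s v := by
      have hmem : (⟨ch v, hch1 v⟩ : G.neighborSet v) ∈ Finset.univ := Finset.mem_univ _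
      rw [Finset.sum_eq_single_of_mem _ hmem]
      · simp only [hB]
        have hc := hch2 v
        rw [if_pos ⟨hc, by omega⟩, hsch v]
      · rintro ⟨b, hb⟩ - hbne
        have hbne' : b ≠ ch v := fun h => hbne (Subtype.ext h)
        simp only [hB]
        rcases tree_dist_dichotomy htree v₀ v b hb with hcase | hcase
        · rw [if_pos ⟨hcase, by omega⟩]
          exact hsother v b hb hcase hbne'
        · rw [if_neg (by omega)]
    have hB2 : ∑ w : G.neighborSet v, B (w : V) v = s v := by
      by_cases hv0 : G.dist v₀ v = 0
      · have hveq : v = v₀ := by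
          have := (htree.isConnected.dist_eq_zero_iff (u := v₀) (v := v)).mp hv0
          exact this.symm
        rw [Finset.sum_eq_zero, hveq, hs0]
        rintro ⟨b, hb⟩ -
        simp only [hB]
        rw [if_neg (by omega)]
      · have hmem : (⟨par v, hpar1 v hv0⟩ : G.neighborSet v) ∈ Finset.univ := Finset.mem_univ _
        rw [Finset.sum_eq_single_of_mem _ hmem]
        · simp only [hB]
          rw [if_pos ⟨by have := hpar2 v hv0; omega, by omega⟩]
        · rintro ⟨b, hb⟩ - hbne
          have hbne' : b ≠ par v := fun h => hbne (Subtype.ext h)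
          simp only [hB]
          rw [if_neg ?_]
          rintro ⟨hc1, hc2⟩
          exact hbne' (tree_parent_unique htree v₀ v b (par v) hb (hpar1 v hv0)
            (by omega) (hpar2 v hv0))
    rw [hB1, hB2]
    ring
end

section
/- Let F ⊆ E be number fields with [E : F] = 2. Let n be the number of real infinite places of F that split in E (i.e. real places of F admitting two distinct extensions to infinite places of E, equivalently whose extensions to E are real), and let s be the number of complex infinite places of F. Then the group {u ∈ 𝓞_E^× : N_{E/F}(u) = 1} of units of the ring of integers of E whose relative norm to F equals 1 is a finitely generated abelian group of rank exactly n + s. -/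
open NumberField

/-- The relative norm map on units of the ring of integers of `E`, valued in `F`:
`u ↦ N_{E/F}(u)`. -/
noncomputable def relativeNormUnits (F E : Type*) [Field F] [Field E] [Algebra F E] :
    (𝓞 E)ˣ →* F :=
  (Algebra.norm F).comp ((Units.coeHom E).comp (Units.map (algebraMap (𝓞 E) E).toMonoidHom))

section Aux

open Polynomial in
theorem RankNormOneAux.normal_of_finrank_two (F E : Type*) [Field F] [Field E] [Algebra F E]
    (hdeg : Module.finrank F E = 2) : Normal F E := by
  have : FiniteDimensional F E := Module.finite_of_finrank_pos (by omega)
  refine ⟨fun x => ?_⟩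
  have hd : (minpoly F x).natDegree ≤ 2 := hdeg ▸ minpoly.natDegree_le x
  set p := (minpoly F x).map (algebraMap F E) with hp
  have hroot : p.IsRoot x := by
    simpa [p, Polynomial.IsRoot, Polynomial.eval_map, Polynomial.aeval_def] using minpoly.aeval F x
  obtain ⟨q, hq⟩ := (Polynomial.dvd_iff_isRoot).mpr hroot
  rw [hq]
  refine Polynomial.Splits.mul (Polynomial.Splits.X_sub_C _) ?_
  apply Polynomial.Splits.of_natDegree_le_one
  have hpd : p.natDegree ≤ 2 := (Polynomial.natDegree_map_le).trans hd
  have hX : (X - C x).natDegree = 1 := Polynomial.natDegree_X_sub_C x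
  rcases eq_or_ne q 0 with rfl | hq0
  · simp
  · have := Polynomial.natDegree_mul (Polynomial.X_sub_C_ne_zero x) hq0
    rw [← hq, hX] at this
    omega

open NumberField.InfinitePlace in
theorem RankNormOneAux.isUnramifiedIn_iff (F E : Type*) [Field F] [NumberField F] [Field E]
    [NumberField E] [Algebra F E] [IsGalois F E] (hdeg : Module.finrank F E = 2)
    (v : InfinitePlace F) :
    v.IsUnramifiedIn E ↔ ((v.IsReal ∧ ∃ w₁ w₂ : InfinitePlace E, w₁ ≠ w₂ ∧
      w₁.comap (algebraMap F E) = v ∧ w₂.comap (algebraMap F E) = v) ∨ v.IsComplex) := by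
  have : FiniteDimensional F E := Module.finite_of_finrank_pos (by omega)
  have hcard : Nat.card (E ≃ₐ[F] E) = 2 := by
    rw [IsGalois.card_aut_eq_finrank, hdeg]
  constructor
  · intro hv
    rcases isReal_or_isComplex v with hr | hc
    · left
      refine ⟨hr, ?_⟩
      obtain ⟨w, rfl⟩ := comap_surjective (K := E) (k := F) v
      have hw : w.IsUnramified F := hv w rfl
      have hstab := hw.stabilizer_eq_bot
      obtain ⟨σ, hσ⟩ : ∃ σ : E ≃ₐ[F] E, σ ≠ 1 := by
        have : Nontrivial (E ≃ₐ[F] E) := Finite.one_lt_card_iff_nontrivial.mp (by omega)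
        exact exists_ne 1
      refine ⟨σ • w, w, fun h => hσ ?_, ?_, rfl⟩
      · have h2 : σ ∈ MulAction.stabilizer (E ≃ₐ[F] E) w := h
        rw [hstab] at h2
        exact h2
      · exact ((mem_orbit_iff (k := F)).mp ⟨σ, rfl⟩).symm
    · right; exact hc
  · rintro (⟨hr, w₁, w₂, hne, h1, h2⟩ | hc) <;> intro w hw
    · by_contra hun
      rw [not_isUnramified_iff_card_stabilizer_eq_two] at hun
      have htop : MulAction.stabilizer (E ≃ₐ[F] E) w = ⊤ :=
        Subgroup.eq_top_of_card_eq _ (by rw [hun, hcard])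
      have key : ∀ w' : InfinitePlace E, w'.comap (algebraMap F E) = v → w' = w := by
        intro w' hw'
        obtain ⟨σ, hσ⟩ := exists_smul_eq_of_comap_eq (k := F) (hw'.trans hw.symm)
        have hmem : σ⁻¹ ∈ MulAction.stabilizer (E ≃ₐ[F] E) w := htop ▸ Subgroup.mem_top _
        calc w' = σ⁻¹ • (σ • w') := by rw [inv_smul_smul]
          _ = σ⁻¹ • w := by rw [hσ]
          _ = w := hmem
      exact hne ((key w₁ h1).trans (key w₂ h2).symm)
    · have hv2 : ¬ v.IsReal := not_isReal_iff_isComplex.mpr hc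
      rw [isUnramified_iff_mult_le, hw, mult, mult]
      split_ifs <;> first | exact absurd ‹v.IsReal› hv2 | norm_num

open NumberField.InfinitePlace Finset in
theorem RankNormOneAux.card_places (F E : Type*) [Field F] [NumberField F] [Field E]
    [NumberField E] [Algebra F E] [IsGalois F E] (hdeg : Module.finrank F E = 2) :
    Fintype.card (InfinitePlace E) = Fintype.card (InfinitePlace F) +
      (Nat.card {v : InfinitePlace F // v.IsReal ∧
        ∃ w₁ w₂ : InfinitePlace E, w₁ ≠ w₂ ∧
          w₁.comap (algebraMap F E) = v ∧ w₂.comap (algebraMap F E) = v} +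
      Nat.card {v : InfinitePlace F // v.IsComplex}) := by
  classical
  have : FiniteDimensional F E := Module.finite_of_finrank_pos (by omega)
  rw [card_eq_card_isUnramifiedIn (k := F) (K := E), hdeg]
  let P₁ : InfinitePlace F → Prop := fun v => v.IsReal ∧
        ∃ w₁ w₂ : InfinitePlace E, w₁ ≠ w₂ ∧
          w₁.comap (algebraMap F E) = v ∧ w₂.comap (algebraMap F E) = v
  show _ = Fintype.card (InfinitePlace F) +
      (Nat.card {v : InfinitePlace F // P₁ v} + Nat.card {v : InfinitePlace F // v.IsComplex})
  have hU : Finset.filter (fun v => InfinitePlace.IsUnramifiedIn E v) Finset.univ =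
      Finset.filter (fun v => P₁ v ∨ v.IsComplex) Finset.univ := by
    ext v
    simpa using RankNormOneAux.isUnramifiedIn_iff F E hdeg v
  have hsplit : (Finset.filter (fun v => P₁ v ∨ v.IsComplex) Finset.univ).card =
      Nat.card {v : InfinitePlace F // P₁ v} + Nat.card {v : InfinitePlace F // v.IsComplex} := by
    rw [Nat.card_eq_fintype_card, Nat.card_eq_fintype_card, Fintype.card_subtype,
      Fintype.card_subtype, Finset.filter_or]
    refine Finset.card_union_of_disjoint ?_
    rw [Finset.disjoint_filter]
    rintro v _ ⟨hr, -⟩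
    exact not_isComplex_iff_isReal.mpr hr
  have hle : (Finset.filter (fun v => P₁ v ∨ v.IsComplex) Finset.univ).card
      ≤ Fintype.card (InfinitePlace F) := Finset.card_le_univ _
  rw [Finset.card_compl, hU, hsplit]
  rw [hsplit] at hle
  omega

theorem RankNormOneAux.rank_additive_units (K : Type*) [Field K] [NumberField K] :
    Module.rank ℤ (Additive (𝓞 K)ˣ) = (Units.rank K : Cardinal) := by
  classical
  have h := LinearMap.rank_range_add_rank_ker (Units.logEmbedding K).toIntLinearMap
  have hrange : LinearMap.range (Units.logEmbedding K).toIntLinearMap = Units.unitLattice K := by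
    rw [Units.unitLattice, Submodule.map_top]
  have hker : Module.rank ℤ (LinearMap.ker (Units.logEmbedding K).toIntLinearMap) = 0 := by
    rw [rank_eq_zero_iff]
    rintro ⟨x, hx⟩
    have hx' : Additive.toMul x ∈ Units.torsion K := by
      rwa [← Units.dirichletUnitTheorem.logEmbedding_eq_zero_iff]
    obtain ⟨n, hn, hxn⟩ := (isOfFinOrder_iff_pow_eq_one).mp hx'
    refine ⟨(n : ℤ), by exact_mod_cast hn.ne', ?_⟩
    apply Subtype.ext
    show (n : ℤ) • x = 0
    rw [natCast_zsmul]
    apply Additive.toMul.injective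
    show Additive.toMul x ^ n = 1
    exact hxn
  rw [hrange, hker, add_zero] at h
  rw [← h, ← Module.finrank_eq_rank (R := ℤ) (M := Units.unitLattice K),
    Units.unitLattice_rank]

end Aux

/-- **Rank of the group of relative norm-one units.**

Let `F ⊆ E` be number fields with `[E : F] = 2`.  Let `n` be the number of real infinite
places of `F` that split in `E` (i.e. admit two distinct extensions to infinite places
of `E`) and `s` the number of complex infinite places of `F`.  Then the group
`{u ∈ 𝓞_E^× : N_{E/F}(u) = 1}` is finitely generated of rank exactly `n + s`. -/
theorem rank_relative_norm_one_units
    (F E : Type*) [Field F] [NumberField F] [Field E] [NumberField E]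
    [Algebra F E] (hdeg : Module.finrank F E = 2) :
    Group.FG (MonoidHom.ker (relativeNormUnits F E)) ∧
    Module.finrank ℤ (Additive (MonoidHom.ker (relativeNormUnits F E))) =
      Nat.card {v : InfinitePlace F // v.IsReal ∧
        ∃ w₁ w₂ : InfinitePlace E, w₁ ≠ w₂ ∧
          w₁.comap (algebraMap F E) = v ∧ w₂.comap (algebraMap F E) = v} +
      Nat.card {v : InfinitePlace F // v.IsComplex} := by
  classical
  have hFD : FiniteDimensional F E := Module.finite_of_finrank_pos (by omega)
  haveI : IsGalois F E :=
    { to_isSeparable := inferInstance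
      to_normal := RankNormOneAux.normal_of_finrank_two F E hdeg }
  set n := Nat.card {v : InfinitePlace F // v.IsReal ∧
        ∃ w₁ w₂ : InfinitePlace E, w₁ ≠ w₂ ∧
          w₁.comap (algebraMap F E) = v ∧ w₂.comap (algebraMap F E) = v} with hn
  set s := Nat.card {v : InfinitePlace F // v.IsComplex} with hs
  -- norm as a map on unit groups
  let N : (𝓞 E)ˣ →* (𝓞 F)ˣ := Units.map (RingOfIntegers.norm F)
  have hker_eq : ∀ u : (𝓞 E)ˣ, u ∈ MonoidHom.ker (relativeNormUnits F E) ↔ N u = 1 := by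
    intro u
    rw [MonoidHom.mem_ker]
    have h1 : relativeNormUnits F E u =
        algebraMap (𝓞 F) F ((N u : (𝓞 F)ˣ) : 𝓞 F) := rfl
    rw [h1, Units.ext_iff]
    show algebraMap (𝓞 F) F ((N u : (𝓞 F)ˣ) : 𝓞 F) = 1 ↔ ((N u : (𝓞 F)ˣ) : 𝓞 F) = 1
    constructor
    · intro h
      apply NumberField.RingOfIntegers.coe_injective
      rw [h, map_one]
    · intro h
      rw [h, map_one]
  -- the associated ℤ-linear map
  let φ : Additive (𝓞 E)ˣ →ₗ[ℤ] Additive (𝓞 F)ˣ := (MonoidHom.toAdditive N).toIntLinearMap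
  have hmemker : ∀ u : (𝓞 E)ˣ, (Additive.ofMul u ∈ LinearMap.ker φ) ↔ N u = 1 := by
    intro u
    rw [LinearMap.mem_ker]
    constructor
    · intro h
      exact Additive.ofMul.injective h
    · intro h
      show Additive.ofMul (N u) = Additive.ofMul 1
      rw [h]
  -- equivalence between the kernel subgroup and the kernel submodule
  let e : Additive (MonoidHom.ker (relativeNormUnits F E)) ≃+ LinearMap.ker φ :=
    { toFun := fun x => ⟨Additive.ofMul ((Additive.toMul x).val),
        (hmemker _).mpr ((hker_eq _).mp (Additive.toMul x).2)⟩
      invFun := fun y => Additive.ofMul ⟨Additive.toMul (y : Additive (𝓞 E)ˣ),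
        (hker_eq _).mpr ((hmemker _).mp y.2)⟩
      left_inv := fun x => rfl
      right_inv := fun y => rfl
      map_add' := fun x y => rfl }
  -- finiteness
  haveI : IsNoetherian ℤ (Additive (𝓞 E)ˣ) := isNoetherian_of_isNoetherianRing_of_finite ℤ _
  haveI hkerfin : Module.Finite ℤ (LinearMap.ker φ) :=
    Module.Finite.iff_fg.mpr (IsNoetherian.noetherian _)
  haveI : Module.Finite ℤ (Additive (MonoidHom.ker (relativeNormUnits F E))) :=
    Module.Finite.equiv e.toIntLinearEquiv.symm
  constructor
  · rw [GroupFG.iff_add_fg, ← Module.Finite.iff_addGroup_fg]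
    infer_instance
  -- rank computation
  have hrankE := RankNormOneAux.rank_additive_units E
  have hrankF := RankNormOneAux.rank_additive_units F
  -- the quotient by the range of φ is 2-torsion
  have hquot : Module.rank ℤ (Additive (𝓞 F)ˣ ⧸ LinearMap.range φ) = 0 := by
    rw [rank_eq_zero_iff]
    intro y
    obtain ⟨x, rfl⟩ := Submodule.Quotient.mk_surjective _ y
    refine ⟨2, two_ne_zero, ?_⟩
    rw [← Submodule.Quotient.mk_smul, Submodule.Quotient.mk_eq_zero]
    refine ⟨Additive.ofMul (Units.map (algebraMap (𝓞 F) (𝓞 E)).toMonoidHom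
      (Additive.toMul x)), ?_⟩
    have hN : N (Units.map (algebraMap (𝓞 F) (𝓞 E)).toMonoidHom (Additive.toMul x))
        = (Additive.toMul x) ^ 2 := by
      rw [Units.ext_iff, Units.val_pow_eq_pow_val]
      show RingOfIntegers.norm F (algebraMap (𝓞 F) (𝓞 E) ((Additive.toMul x).val))
        = ((Additive.toMul x).val) ^ 2
      rw [RingOfIntegers.norm_algebraMap, hdeg]
    show Additive.ofMul (N (Units.map (algebraMap (𝓞 F) (𝓞 E)).toMonoidHom (Additive.toMul x)))
      = (2 : ℤ) • x
    rw [hN, pow_two, two_zsmul]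
    rfl
  -- rank-nullity over different universes
  have hA := LinearMap.lift_rank_range_add_rank_ker φ
  have hB := Submodule.rank_quotient_add_rank (LinearMap.range φ)
  rw [hquot, zero_add, hrankF] at hB
  -- hB : rank (range φ) = rank F units
  have hrange_lt : Module.rank ℤ (LinearMap.range φ) < Cardinal.aleph0 := by
    rw [hB]; exact Cardinal.nat_lt_aleph0 _
  have hker_lt : Module.rank ℤ (LinearMap.ker φ) < Cardinal.aleph0 :=
    lt_of_le_of_lt (Submodule.rank_le _) (by rw [hrankE]; exact Cardinal.nat_lt_aleph0 _)
  rw [hB, hrankE] at hA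
  -- hA : lift (rank F) + lift (rank ker φ) = lift (rank E)
  have htoNat := congrArg Cardinal.toNat hA
  rw [Cardinal.toNat_add (by rw [Cardinal.lift_lt_aleph0]; exact Cardinal.nat_lt_aleph0 _)
      (by rwa [Cardinal.lift_lt_aleph0]),
    Cardinal.toNat_lift, Cardinal.toNat_lift, Cardinal.toNat_lift, Cardinal.toNat_natCast,
    Cardinal.toNat_natCast] at htoNat
  -- htoNat : rank F + toNat (rank ker φ) = rank E
  have hEq : Module.finrank ℤ (Additive (MonoidHom.ker (relativeNormUnits F E)))
      = Module.finrank ℤ (LinearMap.ker φ) :=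
    LinearEquiv.finrank_eq e.toIntLinearEquiv
  have hfr : Module.finrank ℤ (LinearMap.ker φ) = (Module.rank ℤ (LinearMap.ker φ)).toNat := rfl
  -- counting of places
  have hcount := RankNormOneAux.card_places F E hdeg
  have hposF : 1 ≤ Fintype.card (InfinitePlace F) := Fintype.card_pos
  have hrankdef_E : Units.rank E = Fintype.card (InfinitePlace E) - 1 := rfl
  have hrankdef_F : Units.rank F = Fintype.card (InfinitePlace F) - 1 := rfl
  rw [hEq, hfr]
  omega
end
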